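/- arXiv:2401.14202 — 3 statements merged into one kernel-verified Lean document; each statement's English description precedes it below -/
import Mathlib

section
/- Let X be a real Hilbert space and H(u,α,ξ) a stripe with u ≠ 0, ξ ≥ 0. For any x ∈ X, the distance from x to the stripe is dist(x, H(u,α,ξ)) = max(0, (|⟨u,x⟩ - α| - ξ))/‖u‖. -/
/-!
The stripe is the preimage of the interval `closedBall α ξ` under `⟪u, ·⟫`. Moving `x` along `u`
changes `⟪u, x⟫` at rate `‖u‖` per unit length, and by Cauchy–Schwarz no direction does better, so
the distance from `x` to the preimage of any `s ⊆ ℝ` is `infDist ⟪u, x⟫ s / ‖u‖`. The distance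
from a point to a closed ball of radius `ξ` is `max 0 (dist - ξ)`.
-/

open scoped RealInnerProductSpace

open Metric

theorem Metric.infDist_closedBall {E : Type*} [NormedAddCommGroup E] [NormedSpace ℝ E]
    (x c : E) {r : ℝ} (hr : 0 ≤ r) :
    infDist x (closedBall c r) = max 0 (dist x c - r) := by
  rcases le_or_gt (dist x c) r with hx | hx
  · rw [infDist_zero_of_mem (mem_closedBall.2 hx), max_eq_left (by linarith)]
  rw [max_eq_right (by linarith)]
  have hd : dist x c ≠ 0 := by linarith
  apply le_antisymm
  · -- the point of the segment from `x` to `c` at distance `r` from `c`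
    set t := (dist x c - r) / dist x c
    have ht : 0 ≤ t := div_nonneg (by linarith) dist_nonneg
    have h1t : 1 - t = r / dist x c := by
      rw [eq_div_iff hd, sub_mul, div_mul_cancel₀ _ hd]
      ring
    calc infDist x (closedBall c r) ≤ dist x (AffineMap.lineMap x c t) := by
          refine infDist_le_dist_of_mem (mem_closedBall.2 (le_of_eq ?_))
          rw [dist_lineMap_right, h1t, Real.norm_of_nonneg (by positivity),
            div_mul_cancel₀ _ hd]
      _ = dist x c - r := by
          rw [dist_left_lineMap, Real.norm_of_nonneg ht, div_mul_cancel₀ _ hd]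
  · refine (le_infDist (nonempty_closedBall.2 hr)).2 fun z hz => ?_
    linarith [dist_triangle x z c, mem_closedBall.1 hz]

section InnerProductSpace

variable {X : Type*} [NormedAddCommGroup X] [InnerProductSpace ℝ X]

theorem exists_inner_eq_dist_eq {u : X} (hu : u ≠ 0) (x : X) (t : ℝ) :
    ∃ z, ⟪u, z⟫ = t ∧ dist x z = |⟪u, x⟫ - t| / ‖u‖ := by
  have hu2 : ‖u‖ ^ 2 ≠ 0 := by positivity
  refine ⟨x - ((⟪u, x⟫ - t) / ‖u‖ ^ 2) • u, ?_, ?_⟩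
  · rw [inner_sub_right, real_inner_smul_right, real_inner_self_eq_norm_sq,
      div_mul_cancel₀ _ hu2]
    ring
  · rw [dist_eq_norm, sub_sub_cancel, norm_smul, Real.norm_eq_abs, abs_div,
      abs_of_nonneg (sq_nonneg ‖u‖), sq, div_mul_eq_div_div, div_mul_cancel₀ _ (norm_ne_zero_iff.2 hu)]

theorem infDist_preimage_inner {u : X} (hu : u ≠ 0) (x : X) (s : Set ℝ) :
    infDist x {z | ⟪u, z⟫ ∈ s} = infDist ⟪u, x⟫ s / ‖u‖ := by
  have hu' : 0 < ‖u‖ := norm_pos_iff.2 hu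
  rcases s.eq_empty_or_nonempty with rfl | ⟨t₀, ht₀⟩
  · simp
  obtain ⟨z₀, hz₀, -⟩ := exists_inner_eq_dist_eq hu x t₀
  apply le_antisymm
  · rw [le_div_iff₀ hu', le_infDist ⟨t₀, ht₀⟩]
    intro t ht
    obtain ⟨z, hz, hxz⟩ := exists_inner_eq_dist_eq hu x t
    rw [← le_div_iff₀ hu', Real.dist_eq, ← hxz]
    exact infDist_le_dist_of_mem (show ⟪u, z⟫ ∈ s from hz ▸ ht)
  · refine (le_infDist ⟨z₀, show ⟪u, z₀⟫ ∈ s from hz₀ ▸ ht₀⟩).2 fun z hz => ?_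
    rw [div_le_iff₀ hu', mul_comm, dist_eq_norm]
    calc infDist ⟪u, x⟫ s ≤ |⟪u, x⟫ - ⟪u, z⟫| := infDist_le_dist_of_mem hz
      _ = |⟪u, x - z⟫| := by rw [inner_sub_right]
      _ ≤ ‖u‖ * ‖x - z‖ := abs_real_inner_le_norm u (x - z)

end InnerProductSpace

theorem stmt_3_general {X : Type*} [NormedAddCommGroup X] [InnerProductSpace ℝ X]
    (u : X) (hu : u ≠ 0) (α ξ : ℝ) (hξ : 0 ≤ ξ) (x : X) :
    Metric.infDist x {z : X | |⟪u, z⟫ - α| ≤ ξ} = max 0 (|⟪u, x⟫ - α| - ξ) / ‖u‖ := by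
  have hstripe : {z : X | |⟪u, z⟫ - α| ≤ ξ} = {z | ⟪u, z⟫ ∈ closedBall α ξ} := by
    simp only [mem_closedBall, Real.dist_eq]
  rw [hstripe, infDist_preimage_inner hu, infDist_closedBall _ _ hξ, Real.dist_eq]

/-- Distance from a point to the stripe H(u,α,ξ):
    dist(x, H(u,α,ξ)) = max(0, |⟪u,x⟫ - α| - ξ) / ‖u‖. -/
theorem stmt_3 {X : Type*} [NormedAddCommGroup X] [InnerProductSpace ℝ X] [CompleteSpace X]
    (u : X) (hu : u ≠ 0) (α ξ : ℝ) (hξ : 0 ≤ ξ) (x : X) :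
    Metric.infDist x {z : X | |⟪u, z⟫ - α| ≤ ξ} = max 0 (|⟪u, x⟫ - α| - ξ) / ‖u‖ :=
  stmt_3_general u hu α ξ hξ x
end

section
/- Let X, Y be real Hilbert spaces, A^η : X → Y bounded linear, v^δ ∈ Y, and suppose c† ∈ X satisfies ‖A^η c† - v^δ‖ ≤ η·ρ + δ with ‖c†‖ ≤ ρ. For a current iterate c with residual w := A^η c - v^δ, set u := (A^η)* w, α := ⟨u, c⟩ - ‖w‖², and ξ := (η ρ + δ)·‖w‖. Then c† lies in the stripe H(u, α, ξ) = {z : |⟨u,z⟩ - α| ≤ ξ}. -/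
open scoped RealInnerProductSpace

/-
Moving the adjoint across the inner product turns the affine functional `z ↦ ⟪u, z⟫ - α` into
`z ↦ ⟪w, A z - v⟫`; at `c†` its modulus is at most `‖w‖ · ‖A c† - v‖ ≤ ‖w‖ (η ρ + δ)` by
Cauchy–Schwarz.
-/

section Stripe

variable {X Y : Type*} [NormedAddCommGroup X] [InnerProductSpace ℝ X] [CompleteSpace X]
  [NormedAddCommGroup Y] [InnerProductSpace ℝ Y] [CompleteSpace Y]

theorem inner_adjoint_residual_sub (A : X →L[ℝ] Y) (v : Y) (c z : X) :
    ⟪ContinuousLinearMap.adjoint A (A c - v), z⟫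
        - (⟪ContinuousLinearMap.adjoint A (A c - v), c⟫ - ‖A c - v‖ ^ 2)
      = ⟪A c - v, A z - v⟫ := by
  simp only [ContinuousLinearMap.adjoint_inner_left, ← real_inner_self_eq_norm_sq,
    inner_sub_right]
  ring

theorem abs_inner_adjoint_residual_sub_le (A : X →L[ℝ] Y) (v : Y) (c z : X) {r : ℝ}
    (hz : ‖A z - v‖ ≤ r) :
    |⟪ContinuousLinearMap.adjoint A (A c - v), z⟫
        - (⟪ContinuousLinearMap.adjoint A (A c - v), c⟫ - ‖A c - v‖ ^ 2)|
      ≤ r * ‖A c - v‖ := by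
  rw [inner_adjoint_residual_sub]
  calc |⟪A c - v, A z - v⟫| ≤ ‖A c - v‖ * ‖A z - v‖ := abs_real_inner_le_norm _ _
    _ ≤ ‖A c - v‖ * r := mul_le_mul_of_nonneg_left hz (norm_nonneg _)
    _ = r * ‖A c - v‖ := mul_comm _ _

end Stripe

theorem stmt_5_general {X Y : Type*} [NormedAddCommGroup X] [InnerProductSpace ℝ X] [CompleteSpace X]
    [NormedAddCommGroup Y] [InnerProductSpace ℝ Y] [CompleteSpace Y]
    (Aη : X →L[ℝ] Y) (vδ : Y) (η δ ρ : ℝ)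
    (cd : X) (hres : ‖Aη cd - vδ‖ ≤ η * ρ + δ)
    (c : X) (w : Y) (hw : w = Aη c - vδ)
    (u : X) (hu : u = (ContinuousLinearMap.adjoint Aη) w)
    (α ξ : ℝ) (hα : α = ⟪u, c⟫ - ‖w‖ ^ 2) (hξ : ξ = (η * ρ + δ) * ‖w‖) :
    cd ∈ {z : X | |⟪u, z⟫ - α| ≤ ξ} := by
  subst hw hu hα hξ
  exact abs_inner_adjoint_residual_sub_le Aη vδ c cd hres

/-- The RESESOP stripe defined via the residual contains the sought solution c†. -/
theorem stmt_5 {X Y : Type*} [NormedAddCommGroup X] [InnerProductSpace ℝ X] [CompleteSpace X]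
    [NormedAddCommGroup Y] [InnerProductSpace ℝ Y] [CompleteSpace Y]
    (Aη : X →L[ℝ] Y) (vδ : Y) (η δ ρ : ℝ)
    (cd : X) (hres : ‖Aη cd - vδ‖ ≤ η * ρ + δ) (hcd : ‖cd‖ ≤ ρ)
    (c : X) (w : Y) (hw : w = Aη c - vδ)
    (u : X) (hu : u = (ContinuousLinearMap.adjoint Aη) w)
    (α ξ : ℝ) (hα : α = ⟪u, c⟫ - ‖w‖ ^ 2) (hξ : ξ = (η * ρ + δ) * ‖w‖) :
    cd ∈ {z : X | |⟪u, z⟫ - α| ≤ ξ} :=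
  stmt_5_general Aη vδ η δ ρ cd hres c w hw u hu α ξ hα hξ
end

section
/- Let X be a real Hilbert space and suppose stripes H_n := H(u_n, α_n, ξ_n) (with u_n ≠ 0) all contain a common point c†. Define x_{n+1} = P_{H_n}(x_n). If x_n ∉ H_n, then ‖x_{n+1} - c†‖² ≤ ‖x_n - c†‖² - ((|⟨u_n, x_n⟩ - α_n| - ξ_n)/‖u_n‖)². -/
/-!
The stripe `H(u, α, ξ)` is convex, so the projection `p` of `x` onto it makes an obtuse angle at
`p` with every point `c` of the stripe; Pythagoras then gives `‖p - c‖² + ‖x - p‖² ≤ ‖x - c‖²`.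
Since `⟪u, ·⟫` moves by at most `‖u‖ ‖x - p‖` between `x` and `p ∈ H`, the distance `‖x - p‖` is
at least `(|⟪u, x⟫ - α| - ξ) / ‖u‖`, which is nonnegative when `x ∉ H`.
-/

open scoped RealInnerProductSpace

section

variable {X : Type*} [NormedAddCommGroup X] [InnerProductSpace ℝ X]

def stripe (u : X) (α ξ : ℝ) : Set X := {z | |⟪u, z⟫ - α| ≤ ξ}

theorem convex_stripe (u : X) (α ξ : ℝ) : Convex ℝ (stripe u α ξ) :=
  (convex_closedBall α ξ).linear_preimage (innerₛₗ ℝ u)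

theorem real_inner_sub_sub_nonpos_of_forall_norm_sub_le {K : Set X} (hK : Convex ℝ K)
    {x p c : X} (hp : p ∈ K) (hmin : ∀ z ∈ K, ‖x - p‖ ≤ ‖x - z‖) (hc : c ∈ K) :
    ⟪x - p, c - p⟫ ≤ 0 := by
  have : Nonempty K := ⟨⟨p, hp⟩⟩
  have hinf : ‖x - p‖ = ⨅ z : K, ‖x - z‖ :=
    le_antisymm (le_ciInf fun z => hmin z z.2)
      (ciInf_le ⟨0, by rintro _ ⟨z, rfl⟩; exact norm_nonneg _⟩ (⟨p, hp⟩ : K))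
  exact (norm_eq_iInf_iff_real_inner_le_zero hK hp).mp hinf c hc

theorem norm_sub_sq_add_norm_sub_sq_le_of_real_inner_nonpos {x p c : X}
    (h : ⟪x - p, c - p⟫ ≤ 0) : ‖p - c‖ ^ 2 + ‖x - p‖ ^ 2 ≤ ‖x - c‖ ^ 2 := by
  have hexp := norm_add_sq_real (x - p) (p - c)
  rw [sub_add_sub_cancel] at hexp
  have hflip : ⟪x - p, p - c⟫ = -⟪x - p, c - p⟫ := by
    rw [← inner_neg_right, neg_sub]
  linarith

theorem div_norm_le_norm_sub_of_mem_stripe {u : X} {α ξ : ℝ} (x : X) {p : X}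
    (hp : p ∈ stripe u α ξ) : (|⟪u, x⟫ - α| - ξ) / ‖u‖ ≤ ‖x - p‖ := by
  refine div_le_of_le_mul₀ (norm_nonneg u) (norm_nonneg _) ?_
  calc |⟪u, x⟫ - α| - ξ ≤ |⟪u, x⟫ - α| - |⟪u, p⟫ - α| := by gcongr; exact hp
    _ ≤ |⟪u, x - p⟫| := by
      rw [inner_sub_right]
      simpa using abs_sub_abs_le_abs_sub (⟪u, x⟫ - α) (⟪u, p⟫ - α)
    _ ≤ ‖u‖ * ‖x - p‖ := abs_real_inner_le_norm u (x - p)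
    _ = ‖x - p‖ * ‖u‖ := mul_comm _ _
end

theorem stmt_18_general {X : Type*} [NormedAddCommGroup X] [InnerProductSpace ℝ X]
    (u : ℕ → X) (α ξ : ℕ → ℝ)
    (cd : X) (hcd : ∀ n, cd ∈ {z : X | |⟪u n, z⟫ - α n| ≤ ξ n})
    (x : ℕ → X)
    (hx : ∀ n, x (n + 1) ∈ {z : X | |⟪u n, z⟫ - α n| ≤ ξ n} ∧
      ∀ z ∈ {z : X | |⟪u n, z⟫ - α n| ≤ ξ n}, ‖x n - x (n + 1)‖ ≤ ‖x n - z‖)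
    (n : ℕ) (hn : x n ∉ {z : X | |⟪u n, z⟫ - α n| ≤ ξ n}) :
    ‖x (n + 1) - cd‖ ^ 2 ≤ ‖x n - cd‖ ^ 2 - ((|⟪u n, x n⟫ - α n| - ξ n) / ‖u n‖) ^ 2 := by
  obtain ⟨hmem, hmin⟩ := hx n
  have hdescent := norm_sub_sq_add_norm_sub_sq_le_of_real_inner_nonpos
    (real_inner_sub_sub_nonpos_of_forall_norm_sub_le (convex_stripe (u n) (α n) (ξ n))
      hmem hmin (hcd n))
  have hgap : 0 ≤ (|⟪u n, x n⟫ - α n| - ξ n) / ‖u n‖ :=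
    div_nonneg (sub_nonneg.mpr (not_le.mp hn).le) (norm_nonneg _)
  have hdist := pow_le_pow_left₀ hgap (div_norm_le_norm_sub_of_mem_stripe (x n) hmem) 2
  linarith

/-- Quantified per-iteration error decrease for projection onto a stripe containing
    c†: if xₙ ∉ Hₙ then
    ‖x_{n+1} - c†‖² ≤ ‖xₙ - c†‖² - ((|⟪uₙ,xₙ⟫ - αₙ| - ξₙ)/‖uₙ‖)². -/
theorem stmt_18 {X : Type*} [NormedAddCommGroup X] [InnerProductSpace ℝ X] [CompleteSpace X]
    (u : ℕ → X) (hu : ∀ n, u n ≠ 0) (α ξ : ℕ → ℝ) (hξ : ∀ n, 0 ≤ ξ n)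
    (cd : X) (hcd : ∀ n, cd ∈ {z : X | |⟪u n, z⟫ - α n| ≤ ξ n})
    (x : ℕ → X)
    (hx : ∀ n, x (n + 1) ∈ {z : X | |⟪u n, z⟫ - α n| ≤ ξ n} ∧
      ∀ z ∈ {z : X | |⟪u n, z⟫ - α n| ≤ ξ n}, ‖x n - x (n + 1)‖ ≤ ‖x n - z‖)
    (n : ℕ) (hn : x n ∉ {z : X | |⟪u n, z⟫ - α n| ≤ ξ n}) :
    ‖x (n + 1) - cd‖ ^ 2 ≤ ‖x n - cd‖ ^ 2 - ((|⟪u n, x n⟫ - α n| - ξ n) / ‖u n‖) ^ 2 :=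
  stmt_18_general u α ξ cd hcd x hx n hn
end
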